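/- Assume trdeg C[V]^g = codim O_reg, and let x ∈ V be a regular element such that dim span{df(x) : f ∈ C[V]^g} = codim O_x = trdeg C[V]^g and such that the plane span(x, a) is not contained in Sing. Then span{df(x) : f ∈ Y_a} = L_vert(x, a). -/

import Mathlib

open Matrix Module MvPolynomial

attribute [local instance 100] LieRing.ofAssociativeRing

/-! ### Blocks of the Jordan–Kronecker canonical form of a pencil of linear maps -/

/-- The four kinds of blocks occurring in the Jordan–Kronecker canonical form of a pencil
`A + λB`.  `jordan lam0 k` is a Jordan block of size `(k+1) × (k+1)` with (finite) eigenvalue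
`lam0`; `jordanInf k` is a Jordan block of size `(k+1) × (k+1)` with eigenvalue `∞`;
`horKron e` is a horizontal Kronecker block of size `e × (e+1)` (minimal column index `e`);
`vertKron e` is a vertical Kronecker block of size `(e+1) × e` (minimal row index `e`).
A zero `g × h` block is regarded as the block-diagonal sum of `g` vertical Kronecker blocks
of size `1 × 0` and `h` horizontal Kronecker blocks of size `0 × 1`. -/
inductive JKBlock (K : Type*) where
  | jordan (lam0 : K) (k : ℕ)
  | jordanInf (k : ℕ)
  | horKron (eps : ℕ)
  | vertKron (eta : ℕ)

namespace JKBlock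

variable {K : Type*}

/-- Number of rows of a block. -/
def rows : JKBlock K → ℕ
  | jordan _ k => k + 1
  | jordanInf k => k + 1
  | horKron e => e
  | vertKron e => e + 1

/-- Number of columns of a block. -/
def cols : JKBlock K → ℕ
  | jordan _ k => k + 1
  | jordanInf k => k + 1
  | horKron e => e + 1
  | vertKron e => e

/-- The `A`-part of the canonical pencil `A + λ B` on a block. -/
def matA [Zero K] [One K] : (b : JKBlock K) → Matrix (Fin b.rows) (Fin b.cols) K
  | jordan l _ => Matrix.of fun i j =>
      if (j : ℕ) = (i : ℕ) then l else if (j : ℕ) = (i : ℕ) + 1 then 1 else 0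
  | jordanInf _ => Matrix.of fun i j => if (j : ℕ) = (i : ℕ) then 1 else 0
  | horKron _ => Matrix.of fun i j => if (j : ℕ) = (i : ℕ) then 1 else 0
  | vertKron _ => Matrix.of fun i j => if (i : ℕ) = (j : ℕ) then 1 else 0

/-- The `B`-part of the canonical pencil `A + λ B` on a block. -/
def matB [Zero K] [One K] : (b : JKBlock K) → Matrix (Fin b.rows) (Fin b.cols) K
  | jordan _ _ => Matrix.of fun i j => if (j : ℕ) = (i : ℕ) then 1 else 0
  | jordanInf _ => Matrix.of fun i j => if (j : ℕ) = (i : ℕ) + 1 then 1 else 0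
  | horKron _ => Matrix.of fun i j => if (j : ℕ) = (i : ℕ) + 1 then 1 else 0
  | vertKron _ => Matrix.of fun i j => if (i : ℕ) = (j : ℕ) + 1 then 1 else 0

/-- Is the block a horizontal Kronecker block? -/
def isHor : JKBlock K → Bool
  | horKron _ => true
  | _ => false

/-- Is the block a vertical Kronecker block? -/
def isVert : JKBlock K → Bool
  | vertKron _ => true
  | _ => false

/-- Is the block a Jordan block (with finite or infinite eigenvalue)? -/
def isJordanBlock : JKBlock K → Bool
  | jordan _ _ => true
  | jordanInf _ => true
  | _ => false

/-- The minimal column index of a horizontal Kronecker block. -/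
def horIndex : JKBlock K → Option ℕ
  | horKron e => some e
  | _ => none

/-- The minimal row index of a vertical Kronecker block. -/
def vertIndex : JKBlock K → Option ℕ
  | vertKron e => some e
  | _ => none

/-- The size of a Jordan block (`0` for Kronecker blocks). -/
def jordanSize : JKBlock K → ℕ
  | jordan _ k => k + 1
  | jordanInf k => k + 1
  | _ => 0

open scoped Classical in
/-- The size of a Jordan block with (finite) eigenvalue `l0` (`0` for other blocks). -/
noncomputable def jordanSizeAt (l0 : K) : JKBlock K → ℕ
  | jordan l k => if l = l0 then k + 1 else 0
  | _ => 0

/-- The size of a Jordan block with eigenvalue `∞` (`0` for other blocks). -/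
def jordanSizeInf : JKBlock K → ℕ
  | jordanInf k => k + 1
  | _ => 0

/-- The eigenvalue of a Jordan block, as a point of `KP¹ = K ∪ {∞}` (`some none` codes `∞`),
and `none` for Kronecker blocks. -/
def eigOf : JKBlock K → Option (Option K)
  | jordan l _ => some (some l)
  | jordanInf _ => some none
  | _ => none

end JKBlock

/-- The number of horizontal Kronecker blocks (= number of minimal column indices). -/
def countHor {K : Type*} (L : List (JKBlock K)) : ℕ := L.countP fun b => b.isHor

/-- The number of vertical Kronecker blocks (= number of minimal row indices). -/
def countVert {K : Type*} (L : List (JKBlock K)) : ℕ := L.countP fun b => b.isVert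

/-- The total Kronecker h-index: the total number of columns of horizontal Kronecker blocks,
`k_hor = Σ (ε_i + 1)`. -/
def khor {K : Type*} (L : List (JKBlock K)) : ℕ :=
  (L.map fun b => if b.isHor then b.cols else 0).sum

/-- The total Kronecker v-index: the total number of rows of vertical Kronecker blocks,
`k_vert = Σ (η_j + 1)`. -/
def kvert {K : Type*} (L : List (JKBlock K)) : ℕ :=
  (L.map fun b => if b.isVert then b.rows else 0).sum

/-- The multiset of minimal column indices. -/
def colIndices {K : Type*} (L : List (JKBlock K)) : Multiset ℕ :=
  ↑(L.filterMap JKBlock.horIndex)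

/-- The multiset of minimal row indices. -/
def rowIndices {K : Type*} (L : List (JKBlock K)) : Multiset ℕ :=
  ↑(L.filterMap JKBlock.vertIndex)

/-- The minimal column indices, sorted increasingly: `ε₁ ≤ ε₂ ≤ … ≤ ε_p`. -/
def colIdxSorted {K : Type*} (L : List (JKBlock K)) : List ℕ := (colIndices L).sort (· ≤ ·)

/-- The minimal row indices, sorted increasingly: `η₁ ≤ η₂ ≤ … ≤ η_q`. -/
def rowIdxSorted {K : Type*} (L : List (JKBlock K)) : List ℕ := (rowIndices L).sort (· ≤ ·)

/-- The total size of all Jordan blocks with eigenvalue `l0`. -/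
noncomputable def totalJordanAt {K : Type*} (L : List (JKBlock K)) (l0 : K) : ℕ :=
  (L.map (JKBlock.jordanSizeAt l0)).sum

/-- The total size of all Jordan blocks with eigenvalue `∞`. -/
def totalJordanInf {K : Type*} (L : List (JKBlock K)) : ℕ :=
  (L.map JKBlock.jordanSizeInf).sum

/-- The total size of all Jordan blocks. -/
def totalJordan {K : Type*} (L : List (JKBlock K)) : ℕ :=
  (L.map JKBlock.jordanSize).sum

/-- The `A`-part of the canonical block-diagonal pencil determined by a list of blocks. -/
def jkMatA {K : Type*} [Zero K] [One K] (L : List (JKBlock K)) :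
    Matrix ((i : Fin L.length) × Fin (L.get i).rows) ((i : Fin L.length) × Fin (L.get i).cols) K :=
  Matrix.blockDiagonal' fun i => (L.get i).matA

/-- The `B`-part of the canonical block-diagonal pencil determined by a list of blocks. -/
def jkMatB {K : Type*} [Zero K] [One K] (L : List (JKBlock K)) :
    Matrix ((i : Fin L.length) × Fin (L.get i).rows) ((i : Fin L.length) × Fin (L.get i).cols) K :=
  Matrix.blockDiagonal' fun i => (L.get i).matB

/-- `IsJKForm A B L` says that in suitable bases of `U` and `V` the matrices of the pencil
`A + λB` take the block-diagonal canonical form prescribed by the list of blocks `L`. -/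
def IsJKForm {K U V : Type*} [Field K] [AddCommGroup U] [Module K U]
    [AddCommGroup V] [Module K V] (A B : U →ₗ[K] V) (L : List (JKBlock K)) : Prop :=
  ∃ (bU : Basis ((i : Fin L.length) × Fin (L.get i).cols) K U)
    (bV : Basis ((i : Fin L.length) × Fin (L.get i).rows) K V),
    LinearMap.toMatrix bU bV A = jkMatA L ∧ LinearMap.toMatrix bU bV B = jkMatB L

/-- The rank of the pencil `{A + λB}`: the maximum of `rk (A + λB)` over `λ ∈ K`. -/
noncomputable def pencilRank {K U V : Type*} [Field K] [AddCommGroup U] [Module K U]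
    [AddCommGroup V] [Module K V] (A B : U →ₗ[K] V) : ℕ :=
  ⨆ lam : K, finrank K (LinearMap.range (A + lam • B))

/-- `λ` is a regular value of the pencil `{A + λB}` if `rk (A + λB)` equals the rank of the
pencil. -/
def IsRegularValue {K U V : Type*} [Field K] [AddCommGroup U] [Module K U]
    [AddCommGroup V] [Module K V] (A B : U →ₗ[K] V) (lam : K) : Prop :=
  finrank K (LinearMap.range (A + lam • B)) = pencilRank A B

/-- The set of all `r × r` minors of a matrix. -/
def matrixMinors {R : Type*} [CommRing R] {m n : ℕ} (M : Matrix (Fin m) (Fin n) R) (r : ℕ) :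
    Set R :=
  {d | ∃ (f : Fin r → Fin m) (g : Fin r → Fin n), StrictMono f ∧ StrictMono g ∧
        d = (M.submatrix f g).det}

/-- `d` is a greatest common divisor of the set `S`. -/
def IsGCDOf {R : Type*} [CommRing R] (S : Set R) (d : R) : Prop :=
  (∀ s ∈ S, d ∣ s) ∧ ∀ e : R, (∀ s ∈ S, e ∣ s) → e ∣ d

/-- The matrix `μ A + λ B` with formal variables `λ = X 0`, `μ = X 1`. -/
noncomputable def biPencil {R : Type*} [CommRing R] {m n : ℕ} (A B : Matrix (Fin m) (Fin n) R) :
    Matrix (Fin m) (Fin n) (MvPolynomial (Fin 2) R) :=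
  Matrix.of fun i j => X 1 * C (A i j) + X 0 * C (B i j)

open scoped Classical in
/-- The Möbius transformation of `KP¹ = K ∪ {∞}` (coded as `Option K`) induced by the change of
parameters `x' = αx + βa`, `a' = γx + δa` on the eigenvalues of Jordan blocks of pencils:
an eigenvalue `t` of the new pencil corresponds to eigenvalue `(δt − β)/(α − γt)` of the
original. -/
noncomputable def mobiusOpt {K : Type*} [Field K] (a b c d : K) : Option K → Option K :=
  fun t => match t with
    | some t' => if a - c * t' = 0 then none else some ((d * t' - b) / (a - c * t'))
    | none => if c = 0 then none else some (-d / c)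

/-- Transform Jordan block eigenvalues of a block by a map of `KP¹`, keeping sizes and
Kronecker blocks unchanged. -/
noncomputable def mapJKBlock {K : Type*} (f : Option K → Option K) : JKBlock K → JKBlock K
  | .jordan l k =>
      match f (some l) with
      | some l' => .jordan l' k
      | none => .jordanInf k
  | .jordanInf k =>
      match f none with
      | some l' => .jordan l' k
      | none => .jordanInf k
  | b => b

open scoped Classical in
/-- The "algebraic type" of a canonical block list: the collection of multisets of sizes of
Jordan blocks, one multiset for each distinct eigenvalue in `KP¹`, together with the multisets
of minimal column and row indices. -/
noncomputable def algType {K : Type*} (L : List (JKBlock K)) :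
    Multiset (Multiset ℕ) × Multiset ℕ × Multiset ℕ :=
  (((L.filterMap JKBlock.eigOf).toFinset.val).map
      (fun e => ↑(L.filterMap fun b => match b with
        | JKBlock.jordan l k => if (some l : Option K) = e then some (k + 1) else none
        | JKBlock.jordanInf k => if (none : Option K) = e then some (k + 1) else none
        | _ => none)),
    colIndices L, rowIndices L)

/-! ### Representations of Lie algebras -/

section Rep

variable {g : Type*} [LieRing g] [LieAlgebra ℂ g]
variable {V : Type*} [AddCommGroup V] [Module ℂ V]

/-- For a representation `ρ` of a Lie algebra `g` on `V` and `x ∈ V`, the linear operator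
`R_x : g → V`, `R_x ξ = ρ(ξ) x`. -/
def Rmap (ρ : g →ₗ⁅ℂ⁆ Module.End ℂ V) (x : V) : g →ₗ[ℂ] V :=
  ρ.toLinearMap.flip x

/-- The dimension of a regular (maximal-dimensional) orbit: `max_x rk R_x`. -/
noncomputable def dimOreg (ρ : g →ₗ⁅ℂ⁆ Module.End ℂ V) : ℕ :=
  ⨆ x : V, finrank ℂ (LinearMap.range (Rmap ρ x))

/-- A point `a ∈ V` is regular if its stabiliser has minimal dimension. -/
def IsRegularPoint (ρ : g →ₗ⁅ℂ⁆ Module.End ℂ V) (a : V) : Prop :=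
  ∀ x : V, finrank ℂ (LinearMap.ker (Rmap ρ a)) ≤ finrank ℂ (LinearMap.ker (Rmap ρ x))

/-- The dimension of the stabiliser of a regular point. -/
noncomputable def dimStReg (ρ : g →ₗ⁅ℂ⁆ Module.End ℂ V) : ℕ :=
  ⨅ x : V, finrank ℂ (LinearMap.ker (Rmap ρ x))

/-- The set of singular points: those where the rank of `R_x` drops. -/
def Sing (ρ : g →ₗ⁅ℂ⁆ Module.End ℂ V) : Set V :=
  {y | finrank ℂ (LinearMap.range (Rmap ρ y)) < dimOreg ρ}

/-- A function `W → ℂ` on a finite-dimensional complex vector space is polynomial if in some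
basis it is given by a polynomial in the coordinates. -/
def IsPolyMap {W : Type*} [AddCommGroup W] [Module ℂ W] (F : W → ℂ) : Prop :=
  ∃ (n : ℕ) (b : Basis (Fin n) ℂ W) (p : MvPolynomial (Fin n) ℂ),
    ∀ w : W, F w = eval (fun i => b.repr w i) p

/-- A pair `(x, a) ∈ V × V` is generic if it lies in a nonempty Zariski-open subset of `V × V`
(the nonvanishing set of a polynomial) on which the algebraic type of the pencil `R_{x+λa}`
is one and the same. -/
def GenericPair (ρ : g →ₗ⁅ℂ⁆ Module.End ℂ V) (x a : V) : Prop :=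
  ∃ F : V × V → ℂ, IsPolyMap F ∧ F (x, a) ≠ 0 ∧
    ∀ x₁ a₁ x₂ a₂ : V, F (x₁, a₁) ≠ 0 → F (x₂, a₂) ≠ 0 →
      ∀ L₁ L₂ : List (JKBlock ℂ),
        IsJKForm (Rmap ρ x₁) (Rmap ρ a₁) L₁ → IsJKForm (Rmap ρ x₂) (Rmap ρ a₂) L₂ →
          algType L₁ = algType L₂

/-- The matrix of `R_x` in bases `bg` of `g` and `bV` of `V`, with the entries viewed as
(linear) polynomials in the coordinates of `x`. -/
noncomputable def RmatPoly (ρ : g →ₗ⁅ℂ⁆ Module.End ℂ V) {N n : ℕ}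
    (bg : Basis (Fin N) ℂ g) (bV : Basis (Fin n) ℂ V) :
    Matrix (Fin n) (Fin N) (MvPolynomial (Fin n) ℂ) :=
  Matrix.of fun i j => ∑ k, X k * C ((LinearMap.toMatrix bg bV (Rmap ρ (bV k))) i j)

/-- The not-identically-zero `r × r` minors `p₁, …, p_N` of the matrix of `R_x`,
`r = dim O_reg`, viewed as polynomials on `V`. -/
def fundMinors (ρ : g →ₗ⁅ℂ⁆ Module.End ℂ V) {N n : ℕ}
    (bg : Basis (Fin N) ℂ g) (bV : Basis (Fin n) ℂ V) : Set (MvPolynomial (Fin n) ℂ) :=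
  {p | p ∈ matrixMinors (RmatPoly ρ bg bV) (dimOreg ρ) ∧ p ≠ 0}

/-- Membership in the set `Sing₁ = {h₁ = … = h_N = 0}`, where `p_i = p·h_i` and `p` is the
fundamental semi-invariant (a gcd of the nonzero `r × r` minors `p_i`). -/
def InSing1 (ρ : g →ₗ⁅ℂ⁆ Module.End ℂ V) {N n : ℕ}
    (bg : Basis (Fin N) ℂ g) (bV : Basis (Fin n) ℂ V)
    (p : MvPolynomial (Fin n) ℂ) (y : V) : Prop :=
  ∀ q ∈ fundMinors ρ bg bV, ∀ h : MvPolynomial (Fin n) ℂ,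
    q = p * h → eval (fun i => bV.repr y i) h = 0

/-- The singular set has codimension at least `2`: it contains no hypersurface, i.e. there is
no nonconstant polynomial all of whose zeros are singular points. -/
def SingCodimGe2 (ρ : g →ₗ⁅ℂ⁆ Module.End ℂ V) {n : ℕ} (bV : Basis (Fin n) ℂ V) : Prop :=
  ¬ ∃ q : MvPolynomial (Fin n) ℂ, 0 < q.totalDegree ∧
      ∀ y : V, eval (fun i => bV.repr y i) q = 0 → y ∈ Sing ρ

/-- A polynomial `f ∈ ℂ[V]` (in the coordinates given by `bV`) is an invariant of `ρ`:
`R_x^*(df(x)) = 0` for all `x`, i.e. the derivative of `f` along every vector field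
`x ↦ ρ(ξ)x` vanishes identically. -/
def IsInvariantPoly (ρ : g →ₗ⁅ℂ⁆ Module.End ℂ V) {n : ℕ} (bV : Basis (Fin n) ℂ V)
    (f : MvPolynomial (Fin n) ℂ) : Prop :=
  ∀ ξ : g, ∑ i, (∑ k, C ((LinearMap.toMatrix bV bV (ρ ξ)) i k) * X k) * pderiv i f = 0

/-- The differential `df(x)`, in the coordinates dual to `bV`. -/
noncomputable def gradVec {n : ℕ} (bV : Basis (Fin n) ℂ V) (f : MvPolynomial (Fin n) ℂ)
    (x : V) : Fin n → ℂ :=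
  fun i => eval (fun k => bV.repr x k) (pderiv i f)

/-- The span of the differentials at `x` of all polynomials in a set `S`. -/
noncomputable def gradSpan {n : ℕ} (bV : Basis (Fin n) ℂ V)
    (S : Set (MvPolynomial (Fin n) ℂ)) (x : V) : Submodule ℂ (Fin n → ℂ) :=
  Submodule.span ℂ {v | ∃ f ∈ S, v = gradVec bV f x}

/-- The linear functional on coordinate covectors given by pairing with `c`. -/
noncomputable def coordFunctional {n : ℕ} (c : Fin n → ℂ) : (Fin n → ℂ) →ₗ[ℂ] ℂ :=
  ∑ i, c i • LinearMap.proj i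

/-- `Ker R_y^* ⊂ V^*`, in the coordinates dual to `bV`: the covectors annihilating the image
of `R_y`, i.e. annihilating every `ρ(ξ) y`. -/
noncomputable def kerRdual (ρ : g →ₗ⁅ℂ⁆ Module.End ℂ V) {n : ℕ} (bV : Basis (Fin n) ℂ V)
    (y : V) : Submodule ℂ (Fin n → ℂ) :=
  ⨅ ξ : g, LinearMap.ker (coordFunctional fun i => bV.repr ((ρ ξ) y) i)

/-- `L_vert(x,a) = Σ_λ Ker R_{x+λa}^* ⊂ V^*`, the sum over all `λ` with `x + λa ∉ Sing`. -/
noncomputable def LvertSub (ρ : g →ₗ⁅ℂ⁆ Module.End ℂ V) {n : ℕ} (bV : Basis (Fin n) ℂ V)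
    (x a : V) : Submodule ℂ (Fin n → ℂ) :=
  ⨆ lam ∈ {lam : ℂ | x + lam • a ∉ Sing ρ}, kerRdual ρ bV (x + lam • a)

/-- A formal invariant of `ρ` at the point `a`: a formal power series
`G = Σ_j λ^j g_j(x)` with `g_j` homogeneous of degree `j` satisfying the formal identity
`(R_a + λ R_x)^* Σ_j λ^j dg_j(x) = 0`, written out coefficientwise in coordinates. -/
def IsFormalInvariantAt (ρ : g →ₗ⁅ℂ⁆ Module.End ℂ V) {n : ℕ} (bV : Basis (Fin n) ℂ V)
    (a : V) (gs : ℕ → MvPolynomial (Fin n) ℂ) : Prop :=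
  (∀ j, (gs j).IsHomogeneous j) ∧
  ∀ (ξ : g) (j : ℕ),
    (∑ i, C (bV.repr ((ρ ξ) a) i) * pderiv i (gs (j + 1))) +
      ∑ i, (∑ k, C ((LinearMap.toMatrix bV bV (ρ ξ)) i k) * X k) * pderiv i (gs j) = 0

/-- A complete set (a "basis") of formal invariants at `a`: formal invariants whose linear
components have differentials forming a basis of `Ker R_a^* ⊂ V^*`. -/
def IsCompleteFormalSet (ρ : g →ₗ⁅ℂ⁆ Module.End ℂ V) {n : ℕ} (bV : Basis (Fin n) ℂ V)
    (a : V) {q : ℕ} (Gs : Fin q → ℕ → MvPolynomial (Fin n) ℂ) : Prop :=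
  (∀ α, IsFormalInvariantAt ρ bV a (Gs α)) ∧
  LinearIndependent ℂ (fun α => fun i => MvPolynomial.coeff (Finsupp.single i 1) (Gs α 1)) ∧
  Submodule.span ℂ
      (Set.range fun α => fun i => MvPolynomial.coeff (Finsupp.single i 1) (Gs α 1))
    = kerRdual ρ bV a

/-- The transcendence degree of a subset of the polynomial algebra: the supremum of the
cardinalities of algebraically independent families contained in it. -/
noncomputable def setTrdeg {n : ℕ} (S : Set (MvPolynomial (Fin n) ℂ)) : ℕ :=
  sSup {m | ∃ f : Fin m → MvPolynomial (Fin n) ℂ, (∀ i, f i ∈ S) ∧ AlgebraicIndependent ℂ f}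

/-- The shift of a polynomial: `x ↦ f(x + λ a)`. -/
noncomputable def shiftPoly {n : ℕ} (bV : Basis (Fin n) ℂ V) (a : V) (lam : ℂ)
    (f : MvPolynomial (Fin n) ℂ) : MvPolynomial (Fin n) ℂ :=
  MvPolynomial.aeval (fun i => X i + C (lam * bV.repr a i)) f

/-- The subalgebra `Y_a ⊂ ℂ[V]` generated by the shifts `f(x + λa)` of polynomial invariants. -/
noncomputable def Ya (ρ : g →ₗ⁅ℂ⁆ Module.End ℂ V) {n : ℕ} (bV : Basis (Fin n) ℂ V) (a : V) :
    Subalgebra ℂ (MvPolynomial (Fin n) ℂ) :=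
  Algebra.adjoin ℂ {h | ∃ f, IsInvariantPoly ρ bV f ∧ ∃ lam : ℂ, h = shiftPoly bV a lam f}

end Rep

/-! The inclusion `⊆`: the differential at `x` of a shifted invariant `f(· + λa)` is
`df(x + λa) ∈ Ker R*_{x+λa}`. As a function of `λ` it is a polynomial curve lying in
`L_vert(x, a)` for the cofinitely many regular `λ`, hence for all `λ`, and the Leibniz rule carries
this over to the algebra `Y_a` generated by such shifts.

The inclusion `⊇`: choose finitely many invariants `f_α` whose differentials at `x` span a space of
dimension `codim O_reg`. For all but finitely many `λ` the differentials `df_α(x + λa)` keep that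
rank, so they fill `Ker R*_{x+λa}`, which therefore lies in `span{df(x) : f ∈ Y_a}`. Dually, the
annihilator of that span lies in `Im R_{x+λa}` for infinitely many `λ`. Lower semicontinuity of
the rank of the pencil `R_x + λR_a`, extended by one more column, then puts it in `Im R_{x+λa}`
for every regular `λ`. -/

section PolynomialFamilies

open scoped Polynomial

variable {K : Type*} [Field K]

theorem exists_linearIndependent_comp_of_le_finrank_span {ι E : Type*} [AddCommGroup E]
    [Module K E] [FiniteDimensional K E] (v : ι → E) {s : ℕ}
    (hs : s ≤ finrank K (Submodule.span K (Set.range v))) :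
    ∃ f : Fin s → ι, LinearIndependent K (v ∘ f) := by
  obtain ⟨κ, a, -, hspan, hli⟩ := exists_linearIndependent' K v
  have := hli.finite
  cases nonempty_fintype κ
  rw [← hspan, finrank_span_eq_card hli] at hs
  obtain ⟨e⟩ := Function.Embedding.nonempty_of_card_le (α := Fin s) (by simpa using hs)
  exact ⟨a ∘ e, hli.comp e e.injective⟩

theorem Matrix.exists_submatrix_det_ne_zero_of_le_rank {m n : Type*} [Fintype m] [Fintype n]
    (A : Matrix m n K) {s : ℕ} (hs : s ≤ A.rank) :
    ∃ (f : Fin s → m) (g : Fin s → n), (A.submatrix f g).det ≠ 0 := by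
  rw [A.rank_eq_finrank_span_cols] at hs
  obtain ⟨g, hg⟩ := exists_linearIndependent_comp_of_le_finrank_span A.col hs
  have hrows : s ≤ finrank K (Submodule.span K (Set.range (A.submatrix _root_.id g).row)) := by
    rw [← Matrix.rank_eq_finrank_span_row, ← Matrix.rank_transpose,
      LinearIndependent.rank_matrix (M := (A.submatrix _root_.id g)ᵀ) hg, Fintype.card_fin]
  obtain ⟨f, hf⟩ := exists_linearIndependent_comp_of_le_finrank_span _ hrows
  exact ⟨f, g, ((Matrix.isUnit_iff_isUnit_det _).mp
    (Matrix.linearIndependent_rows_iff_isUnit.mp hf)).ne_zero⟩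

theorem Matrix.finite_setOf_rank_map_eval_lt {m n : Type*} [Fintype m] [Fintype n]
    (P : Matrix m n K[X]) {s : ℕ} {μ : K} (hμ : s ≤ (P.map (Polynomial.eval μ)).rank) :
    {t | (P.map (Polynomial.eval t)).rank < s}.Finite := by
  obtain ⟨f, g, hdet⟩ := (P.map (Polynomial.eval μ)).exists_submatrix_det_ne_zero_of_le_rank hμ
  have hminor : ∀ t,
      ((P.map (Polynomial.eval t)).submatrix f g).det = (P.submatrix f g).det.eval t :=
    fun t => ((Polynomial.evalRingHom t).map_det (P.submatrix f g)).symm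
  rw [hminor] at hdet
  have hq : (P.submatrix f g).det ≠ 0 := fun h => hdet (by rw [h, Polynomial.eval_zero])
  refine (Polynomial.finite_setOfPred_isRoot hq).subset fun t ht => ?_
  by_contra hroot
  have hle := (P.map (Polynomial.eval t)).rank_submatrix_le f g
  rw [Matrix.rank_of_det_ne_zero (by rwa [hminor]), Fintype.card_fin] at hle
  exact (Nat.lt_irrefl _ (hle.trans_lt ht))

theorem Submodule.eval_mem_of_infinite_setOf_eval_mem {ι : Type*} [Fintype ι]
    (W : Submodule K (ι → K)) (p : ι → K[X])
    (hp : {t | (fun i => (p i).eval t) ∈ W}.Infinite) (μ : K) :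
    (fun i => (p i).eval μ) ∈ W := by
  classical
  rw [← Subspace.forall_mem_dualAnnihilator_apply_eq_zero_iff]
  intro φ hφ
  set q : K[X] := ∑ i, Polynomial.C (φ fun j => if i = j then 1 else 0) * p i
  have hq : ∀ t, q.eval t = φ (fun i => (p i).eval t) := fun t => by
    rw [φ.pi_apply_eq_sum_univ, Polynomial.eval_finsetSum]
    simp only [Polynomial.eval_mul, Polynomial.eval_C, smul_eq_mul, mul_comm]
  have hq0 : q = 0 := Polynomial.eq_zero_of_infinite_isRoot q <| hp.mono fun t ht =>
    (hq t).trans ((W.mem_dualAnnihilator φ).mp hφ _ ht)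
  rw [← hq, hq0, Polynomial.eval_zero]

variable {U E : Type*} [AddCommGroup U] [Module K U] [FiniteDimensional K U]
  [AddCommGroup E] [Module K E] [FiniteDimensional K E]

theorem LinearMap.finite_setOf_finrank_range_add_smul_lt (A B : U →ₗ[K] E) {s : ℕ} {μ : K}
    (hμ : s ≤ finrank K (range (A + μ • B))) :
    {t : K | finrank K (range (A + t • B)) < s}.Finite := by
  let bU := Module.finBasis K U
  let bE := Module.finBasis K E
  let P : Matrix _ _ K[X] := (toMatrix bU bE A).map Polynomial.C +
    (Polynomial.X : K[X]) • (toMatrix bU bE B).map Polynomial.C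
  have hP : ∀ t, finrank K (range (A + t • B)) = (P.map (Polynomial.eval t)).rank := fun t => by
    have hPt : P.map (Polynomial.eval t) = toMatrix bU bE (A + t • B) := by
      ext
      simp only [P, map_apply, Matrix.add_apply, Matrix.smul_apply, smul_eq_mul,
        Polynomial.X_mul_C, Polynomial.eval_add, Polynomial.eval_C, Polynomial.eval_mul,
        Polynomial.eval_X, map_add, map_smul, add_right_inj]
      ring
    rw [hPt, Matrix.rank_eq_finrank_range_toLin _ bE bU, Matrix.toLin_toMatrix]
  simp only [hP] at hμ ⊢
  exact P.finite_setOf_rank_map_eval_lt hμ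

/-- Lower semicontinuity of the rank, applied to the pencil extended by the column `w`. -/
theorem LinearMap.mem_range_add_smul_of_infinite (A B : U →ₗ[K] E) {S : Set K} (hS : S.Infinite)
    {r : ℕ} (hr : ∀ t ∈ S, finrank K (range (A + t • B)) ≤ r) {w : E}
    (hw : ∀ t ∈ S, w ∈ range (A + t • B)) {μ : K} (hμ : r ≤ finrank K (range (A + μ • B))) :
    w ∈ range (A + μ • B) := by
  by_contra hwμ
  let A' : U × K →ₗ[K] E := A.coprod (toSpanSingleton K E w)
  let B' : U × K →ₗ[K] E := B.coprod 0
  have hrange : ∀ t : K, range (A' + t • B') = range (A + t • B) ⊔ K ∙ w := fun t => by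
    have : A' + t • B' = (A + t • B).coprod (toSpanSingleton K E w) := by
      ext <;> simp [A', B']
    rw [this, range_coprod, range_toSpanSingleton]
  have hlt : range (A + μ • B) < range (A' + μ • B') := by
    rw [hrange]
    exact left_lt_sup.mpr (by rwa [Submodule.span_singleton_le_iff_mem])
  have hfin := finite_setOf_finrank_range_add_smul_lt A' B' (s := r + 1) (μ := μ)
    (by have := Submodule.finrank_lt_finrank_of_lt hlt; omega)
  refine hS (hfin.subset fun t ht => ?_)
  have hext : range (A' + t • B') = range (A + t • B) := by
    rw [hrange, sup_eq_left, Submodule.span_singleton_le_iff_mem]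
    exact hw t ht
  change finrank K (range (A' + t • B')) < r + 1
  rw [hext]
  exact Nat.lt_succ_of_le (hr t ht)

theorem LinearMap.dualAnnihilator_range_add_smul_le_of_infinite (A B : U →ₗ[K] E)
    {S : Set K} (hS : S.Infinite) {r : ℕ} (hr : ∀ t ∈ S, finrank K (range (A + t • B)) ≤ r)
    {W : Submodule K (Module.Dual K E)} (hW : ∀ t ∈ S, (range (A + t • B)).dualAnnihilator ≤ W)
    {μ : K} (hμ : r ≤ finrank K (range (A + μ • B))) :
    (range (A + μ • B)).dualAnnihilator ≤ W := by
  have hco : W.dualCoannihilator ≤ range (A + μ • B) := fun w hw =>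
    mem_range_add_smul_of_infinite A B hS hr (fun t ht => by
      rw [← Subspace.dualAnnihilator_dualCoannihilator_eq (W := range (A + t • B))]
      exact Submodule.dualCoannihilator_anti (hW t ht) hw) hμ
  calc (range (A + μ • B)).dualAnnihilator
      ≤ W.dualCoannihilator.dualAnnihilator := Submodule.dualAnnihilator_anti hco
    _ = W := Subspace.dualCoannihilator_dualAnnihilator_eq

theorem MvPolynomial.pderiv_aeval_X_add_C {σ R : Type*} [CommSemiring R] (c : σ → R)
    (f : MvPolynomial σ R) (i : σ) :
    pderiv i (aeval (fun j => X j + C (c j)) f) = aeval (fun j => X j + C (c j)) (pderiv i f) := by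
  induction f using MvPolynomial.induction_on with
  | C a => simp
  | add p q hp hq => simp only [map_add, hp, hq]
  | mul_X p j hp =>
    rcases eq_or_ne i j with rfl | hij
    · simp only [map_mul, map_add, aeval_X, pderiv_mul, pderiv_X_self, pderiv_C,
        add_zero, mul_one, hp]
    · simp only [map_mul, map_add, aeval_X, pderiv_mul, pderiv_X_of_ne hij.symm,
        pderiv_C, add_zero, mul_zero, hp]

end PolynomialFamilies

section Representation

open scoped Polynomial

variable {g : Type*} [LieRing g] [LieAlgebra ℂ g] {V : Type*} [AddCommGroup V] [Module ℂ V]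
  (ρ : g →ₗ⁅ℂ⁆ Module.End ℂ V)

theorem Rmap_add_smul (x a : V) (t : ℂ) : Rmap ρ (x + t • a) = Rmap ρ x + t • Rmap ρ a := by
  ext ξ
  simp [Rmap]

variable {n : ℕ} (bV : Basis (Fin n) ℂ V)

theorem kerRdual_eq_map_dualAnnihilator (y : V) :
    kerRdual ρ bV y =
      (LinearMap.range (Rmap ρ y)).dualAnnihilator.map
        (bV.dualBasis.equivFun : Module.Dual ℂ V →ₗ[ℂ] Fin n → ℂ) := by
  ext v
  simp [Submodule.mem_map_equiv, Submodule.mem_dualAnnihilator, kerRdual, Submodule.mem_iInf,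
    coordFunctional, Rmap, Basis.equivFun_symm_apply, mul_comm]

theorem kerRdual_le_iff (y : V) (W : Submodule ℂ (Fin n → ℂ)) :
    kerRdual ρ bV y ≤ W ↔
      (LinearMap.range (Rmap ρ y)).dualAnnihilator ≤
        W.comap (bV.dualBasis.equivFun : Module.Dual ℂ V →ₗ[ℂ] Fin n → ℂ) := by
  rw [kerRdual_eq_map_dualAnnihilator, Submodule.map_le_iff_le_comap]

theorem gradVec_mem_kerRdual {f : MvPolynomial (Fin n) ℂ} (hf : IsInvariantPoly ρ bV f) (y : V) :
    gradVec bV f y ∈ kerRdual ρ bV y := by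
  simp only [kerRdual, Submodule.mem_iInf, LinearMap.mem_ker]
  intro ξ
  have hcoord : ∀ i, ∑ k, LinearMap.toMatrix bV bV (ρ ξ) i k * bV.repr y k = bV.repr (ρ ξ y) i :=
    fun i => congrFun (LinearMap.toMatrix_mulVec_repr bV bV (ρ ξ) y) i
  have := congrArg (eval (bV.repr y)) (hf ξ)
  simpa [coordFunctional, gradVec, hcoord] using this

theorem gradVec_mem_of_mem_adjoin {S : Set (MvPolynomial (Fin n) ℂ)}
    {W : Submodule ℂ (Fin n → ℂ)} {y : V} (hS : ∀ f ∈ S, gradVec bV f y ∈ W)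
    {p : MvPolynomial (Fin n) ℂ} (hp : p ∈ Algebra.adjoin ℂ S) : gradVec bV p y ∈ W := by
  induction hp using Algebra.adjoin_induction with
  | mem f hf => exact hS f hf
  | algebraMap c =>
    convert W.zero_mem
    funext i
    simp [gradVec]
  | add p q _ _ hp hq =>
    convert W.add_mem hp hq using 1
    funext i
    simp [gradVec]
  | mul p q _ _ hp hq =>
    have hLeibniz : gradVec bV (p * q) y =
        eval (bV.repr y) p • gradVec bV q y + eval (bV.repr y) q • gradVec bV p y := by
      funext i
      simp [gradVec]
    rw [hLeibniz]
    exact W.add_mem (W.smul_mem _ hq) (W.smul_mem _ hp)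

noncomputable def gradVecLine (f : MvPolynomial (Fin n) ℂ) (x a : V) : Fin n → ℂ[X] :=
  fun i => aeval (fun k => Polynomial.C (bV.repr x k) + Polynomial.X * Polynomial.C (bV.repr a k))
    (pderiv i f)

theorem eval_gradVecLine (f : MvPolynomial (Fin n) ℂ) (x a : V) (t : ℂ) :
    (fun i => (gradVecLine bV f x a i).eval t) = gradVec bV f (x + t • a) := by
  funext i
  change Polynomial.aeval t (aeval _ (pderiv i f)) =
    aeval (fun k => bV.repr (x + t • a) k) (pderiv i f)
  rw [comp_aeval_apply]
  refine congrArg (fun φ => aeval φ (pderiv i f)) (funext fun k => ?_)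
  simp only [map_add, map_mul, Polynomial.aeval_C, Polynomial.aeval_X, map_smul,
    Algebra.algebraMap_self, RingHom.id_apply, Finsupp.coe_add, Finsupp.coe_smul, Pi.add_apply,
    Pi.smul_apply, smul_eq_mul]

theorem gradVec_shiftPoly (f : MvPolynomial (Fin n) ℂ) (x a : V) (t : ℂ) :
    gradVec bV (shiftPoly bV a t f) x = gradVec bV f (x + t • a) := by
  funext i
  change aeval (fun k => bV.repr x k) (pderiv i (aeval _ f)) =
    aeval (fun k => bV.repr (x + t • a) k) (pderiv i f)
  rw [pderiv_aeval_X_add_C, comp_aeval_apply]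
  refine congrArg (fun φ => aeval φ (pderiv i f)) (funext fun k => ?_)
  simp

theorem gradSpan_Ya_le_LvertSub {x a : V} (hreg : {t : ℂ | x + t • a ∉ Sing ρ}.Infinite) :
    gradSpan bV (Ya ρ bV a) x ≤ LvertSub ρ bV x a := by
  refine Submodule.span_le.mpr ?_
  rintro _ ⟨p, hp, rfl⟩
  refine gradVec_mem_of_mem_adjoin bV ?_ hp
  rintro _ ⟨f, hf, t, rfl⟩
  rw [gradVec_shiftPoly, ← eval_gradVecLine]
  refine Submodule.eval_mem_of_infinite_setOf_eval_mem _ _ (hreg.mono fun s hs => ?_) t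
  rw [Set.mem_ofPred_eq, eval_gradVecLine]
  exact le_biSup (fun s => kerRdual ρ bV (x + s • a)) hs (gradVec_mem_kerRdual ρ bV hf _)

variable [FiniteDimensional ℂ V]

theorem finrank_range_Rmap_le_dimOreg (y : V) :
    finrank ℂ (LinearMap.range (Rmap ρ y)) ≤ dimOreg ρ :=
  le_ciSup (f := fun z : V => finrank ℂ (LinearMap.range (Rmap ρ z)))
    ⟨finrank ℂ V, by rintro _ ⟨z, rfl⟩; exact Submodule.finrank_le _⟩ y

theorem notMem_Sing_iff {y : V} :
    y ∉ Sing ρ ↔ finrank ℂ (LinearMap.range (Rmap ρ y)) = dimOreg ρ := by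
  rw [Sing, Set.mem_ofPred_eq, not_lt]
  exact ⟨(finrank_range_Rmap_le_dimOreg ρ y).antisymm, Eq.ge⟩

theorem IsRegularPoint.finrank_range_Rmap [Module.Finite ℂ g] {x : V}
    (hx : IsRegularPoint ρ x) : finrank ℂ (LinearMap.range (Rmap ρ x)) = dimOreg ρ :=
  (finrank_range_Rmap_le_dimOreg ρ x).antisymm <| ciSup_le fun y => by
    have := LinearMap.finrank_range_add_finrank_ker (Rmap ρ x)
    have := LinearMap.finrank_range_add_finrank_ker (Rmap ρ y)
    have := hx y
    omega

theorem IsRegularPoint.notMem_Sing [Module.Finite ℂ g] {x : V} (hx : IsRegularPoint ρ x) :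
    x ∉ Sing ρ :=
  (notMem_Sing_iff ρ).mpr (IsRegularPoint.finrank_range_Rmap ρ hx)

theorem finite_setOf_add_smul_mem_Sing [Module.Finite ℂ g] {x : V} (hx : x ∉ Sing ρ) (a : V) :
    {t : ℂ | x + t • a ∈ Sing ρ}.Finite := by
  have h0 : dimOreg ρ ≤ finrank ℂ (LinearMap.range (Rmap ρ x + (0 : ℂ) • Rmap ρ a)) := by
    rw [zero_smul, add_zero, (notMem_Sing_iff ρ).mp hx]
  convert (Rmap ρ x).finite_setOf_finrank_range_add_smul_lt (Rmap ρ a) h0 using 3 with t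
  rw [← Rmap_add_smul]
  rfl

theorem finrank_kerRdual (y : V) :
    finrank ℂ (kerRdual ρ bV y) = finrank ℂ V - finrank ℂ (LinearMap.range (Rmap ρ y)) := by
  rw [kerRdual_eq_map_dualAnnihilator, LinearEquiv.finrank_map_eq]
  have := Subspace.finrank_add_finrank_dualAnnihilator_eq (LinearMap.range (Rmap ρ y))
  omega

theorem kerRdual_le_gradSpan_Ya {ι : Type*} (f : ι → MvPolynomial (Fin n) ℂ)
    (hf : ∀ α, IsInvariantPoly ρ bV (f α)) {x a : V} {t : ℂ} (ht : x + t • a ∉ Sing ρ)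
    (hrank : finrank ℂ V - dimOreg ρ ≤
      finrank ℂ (Submodule.span ℂ (Set.range fun α => gradVec bV (f α) (x + t • a)))) :
    kerRdual ρ bV (x + t • a) ≤ gradSpan bV (Ya ρ bV a) x := by
  have hker : Submodule.span ℂ (Set.range fun α => gradVec bV (f α) (x + t • a)) ≤
      kerRdual ρ bV (x + t • a) :=
    Submodule.span_le.mpr <| Set.range_subset_iff.mpr fun α => gradVec_mem_kerRdual ρ bV (hf α) _
  rw [← Submodule.eq_of_le_of_finrank_le hker
    (by rwa [finrank_kerRdual, (notMem_Sing_iff ρ).mp ht]), Submodule.span_le,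
    Set.range_subset_iff]
  intro α
  rw [← gradVec_shiftPoly]
  exact Submodule.subset_span ⟨_, Algebra.subset_adjoin ⟨f α, hf α, t, rfl⟩, rfl⟩

theorem finite_setOf_not_kerRdual_le_gradSpan_Ya [Module.Finite ℂ g] {x : V}
    (hx : IsRegularPoint ρ x)
    (hdx : finrank ℂ (gradSpan bV {f | IsInvariantPoly ρ bV f} x) =
      finrank ℂ V - finrank ℂ (LinearMap.range (Rmap ρ x))) (a : V) :
    {t : ℂ | ¬ kerRdual ρ bV (x + t • a) ≤ gradSpan bV (Ya ρ bV a) x}.Finite := by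
  let v : {f // IsInvariantPoly ρ bV f} → Fin n → ℂ := fun f => gradVec bV f x
  obtain ⟨κ, f, -, hspan, hli⟩ := exists_linearIndependent' ℂ v
  have := hli.finite
  cases nonempty_fintype κ
  let G : Matrix (Fin n) κ ℂ[X] := .of fun i α => gradVecLine bV (f α) x a i
  have hG : ∀ t, (G.map (Polynomial.eval t)).rank =
      finrank ℂ (Submodule.span ℂ (Set.range fun α => gradVec bV (f α) (x + t • a))) := by
    intro t
    have hcol : (G.map (Polynomial.eval t)).col = fun α => gradVec bV (f α) (x + t • a) := by
      funext α
      exact eval_gradVecLine bV (f α) x a t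
    rw [Matrix.rank_eq_finrank_span_cols, hcol]
  have hv : Submodule.span ℂ (Set.range v) = gradSpan bV {f | IsInvariantPoly ρ bV f} x := by
    unfold gradSpan
    congr 1
    ext w
    simp [v, eq_comm]
  have hG0 : finrank ℂ V - dimOreg ρ ≤ (G.map (Polynomial.eval 0)).rank := by
    rw [hG, zero_smul, add_zero, ← IsRegularPoint.finrank_range_Rmap ρ hx, ← hdx, ← hv, ← hspan]
    rfl
  refine ((G.finite_setOf_rank_map_eval_lt hG0).union
    (finite_setOf_add_smul_mem_Sing ρ (IsRegularPoint.notMem_Sing ρ hx) a)).subset fun t ht => ?_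
  by_contra hgood
  simp only [Set.mem_union, Set.mem_ofPred_eq, not_or, not_lt, hG] at hgood
  exact ht (kerRdual_le_gradSpan_Ya ρ bV (fun α => (f α).1) (fun α => (f α).2) hgood.2 hgood.1)

theorem LvertSub_le_gradSpan_Ya [Module.Finite ℂ g] {x : V} (hx : IsRegularPoint ρ x)
    (hdx : finrank ℂ (gradSpan bV {f | IsInvariantPoly ρ bV f} x) =
      finrank ℂ V - finrank ℂ (LinearMap.range (Rmap ρ x))) (a : V) :
    LvertSub ρ bV x a ≤ gradSpan bV (Ya ρ bV a) x := by
  refine iSup₂_le fun μ hμ => ?_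
  rw [kerRdual_le_iff, Rmap_add_smul]
  refine (Rmap ρ x).dualAnnihilator_range_add_smul_le_of_infinite (Rmap ρ a)
    (finite_setOf_not_kerRdual_le_gradSpan_Ya ρ bV hx hdx a).infinite_compl (r := dimOreg ρ)
    (fun t _ => ?_) (fun t ht => ?_) ?_
  · rw [← Rmap_add_smul]
    exact finrank_range_Rmap_le_dimOreg ρ _
  · rw [← Rmap_add_smul, ← kerRdual_le_iff]
    exact not_not.mp ht
  · rw [← Rmap_add_smul, (notMem_Sing_iff ρ).mp hμ]

end Representation

theorem Ya_differentials_span_Lvert_general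
    {g : Type} [LieRing g] [LieAlgebra ℂ g] [Module.Finite ℂ g]
    {V : Type} [AddCommGroup V] [Module ℂ V] [FiniteDimensional ℂ V]
    (ρ : g →ₗ⁅ℂ⁆ Module.End ℂ V) {n : ℕ} (bV : Basis (Fin n) ℂ V)
    (x a : V) (hx : IsRegularPoint ρ x)
    (hdx : finrank ℂ ↥(gradSpan bV {f | IsInvariantPoly ρ bV f} x)
      = finrank ℂ V - finrank ℂ (LinearMap.range (Rmap ρ x))) :
    gradSpan bV (↑(Ya ρ bV a) : Set (MvPolynomial (Fin n) ℂ)) x = LvertSub ρ bV x a := by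
  refine le_antisymm (gradSpan_Ya_le_LvertSub ρ bV ?_) (LvertSub_le_gradSpan_Ya ρ bV hx hdx a)
  exact (finite_setOf_add_smul_mem_Sing ρ (IsRegularPoint.notMem_Sing ρ hx) a).infinite_compl

/-- Assume `ρ` has a complete set of polynomial invariants
(`trdeg ℂ[V]^g = codim O_reg`) and let `x ∈ V` be a regular element at which the differentials
of the polynomial invariants span a subspace of dimension `codim O_x = trdeg ℂ[V]^g`, such that
the plane `span(x, a)` is not contained in `Sing`.  Then
`span{df(x) : f ∈ Y_a} = L_vert(x, a)`. -/
theorem Ya_differentials_span_Lvert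
    {g : Type} [LieRing g] [LieAlgebra ℂ g] [Module.Finite ℂ g]
    {V : Type} [AddCommGroup V] [Module ℂ V] [FiniteDimensional ℂ V]
    (ρ : g →ₗ⁅ℂ⁆ Module.End ℂ V) {n : ℕ} (bV : Basis (Fin n) ℂ V)
    (hcomplete : setTrdeg {f | IsInvariantPoly ρ bV f} = finrank ℂ V - dimOreg ρ)
    (x a : V) (hx : IsRegularPoint ρ x)
    (hdx : finrank ℂ ↥(gradSpan bV {f | IsInvariantPoly ρ bV f} x)
      = finrank ℂ V - finrank ℂ (LinearMap.range (Rmap ρ x)))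
    (hplane : ¬ (↑(Submodule.span ℂ ({x, a} : Set V)) : Set V) ⊆ Sing ρ) :
    gradSpan bV (↑(Ya ρ bV a) : Set (MvPolynomial (Fin n) ℂ)) x = LvertSub ρ bV x a :=
  Ya_differentials_span_Lvert_general ρ bV x a hx hdx
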